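/- Let D = (E,𝓕) be a delta-matroid and let x, y be positive real numbers. Then Σ_{B⊆E} (y/x)^{|B|/2} (xy)^{d(D*B)/2} = (y/x)^{r(E)/2} · Σ_{A⊆E} x^{r(E)−r(A)} y^{|A|−r(A)} (xy)^{−σ(A)/2}, where r is the rank function of D_min (r(S) = max{|F ∩ S| : F ∈ 𝓕_min(D)}), d(D') is the minimum cardinality of a feasible set of D', and σ(A) is the maximum cardinality of a feasible set of the restriction D|A minus the minimum cardinality of a feasible set of D|A. (This is the identity Q_{(1,√(y/x),0)}(D;√(xy)) = (√(y/x))^{r(E)} R(D; x+1, y, 1/√(xy)) relating the transition polynomial and the Bollobás–Riordan polynomial of D.) -/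

import Mathlib

open scoped symmDiff

structure SetSystem (α : Type) [DecidableEq α] where
  E : Finset α
  F : Finset (Finset α)

namespace SetSystem

variable {α : Type} [DecidableEq α]

/-- A delta-matroid: nonempty collection of feasible subsets of the ground set
satisfying the symmetric exchange axiom. -/
def IsDeltaMatroid (D : SetSystem α) : Prop :=
  D.F.Nonempty ∧ (∀ F ∈ D.F, F ⊆ D.E) ∧
    ∀ X ∈ D.F, ∀ Y ∈ D.F, ∀ u ∈ X ∆ Y, ∃ v ∈ X ∆ Y, X ∆ ({u, v} : Finset α) ∈ D.F

/-- A matroid, viewed as a delta-matroid whose feasible sets are equicardinal. -/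
def IsMatroid (D : SetSystem α) : Prop :=
  D.IsDeltaMatroid ∧ ∀ F₁ ∈ D.F, ∀ F₂ ∈ D.F, F₁.card = F₂.card

/-- The twist `D*A`. -/
def twist (D : SetSystem α) (A : Finset α) : SetSystem α :=
  ⟨D.E, D.F.image fun F => A ∆ F⟩

/-- The dual `D* := D * E`. -/
def dual (D : SetSystem α) : SetSystem α := D.twist D.E

def IsLoop (D : SetSystem α) (e : α) : Prop := ∀ F ∈ D.F, e ∉ F

def IsColoop (D : SetSystem α) (e : α) : Prop := ∀ F ∈ D.F, e ∈ F

open Classical in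
/-- Deletion of a single element (when `e` is a coloop, `D∖e := D/e`). -/
noncomputable def del (D : SetSystem α) (e : α) : SetSystem α :=
  if D.IsColoop e then ⟨D.E.erase e, D.F.image fun F => F.erase e⟩
  else ⟨D.E.erase e, D.F.filter fun F => e ∉ F⟩

open Classical in
/-- Contraction of a single element (when `e` is a loop, `D/e := D∖e`). -/
noncomputable def con (D : SetSystem α) (e : α) : SetSystem α :=
  if D.IsLoop e then ⟨D.E.erase e, D.F.filter fun F => e ∉ F⟩
  else ⟨D.E.erase e, (D.F.filter fun F => e ∈ F).image fun F => F.erase e⟩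

/-- Loop complementation on a single element. -/
def lc (D : SetSystem α) (e : α) : SetSystem α :=
  ⟨D.E, D.F ∆ ((D.F.filter fun F => e ∉ F).image fun F => insert e F)⟩

/-- Loop complementation on a set of elements (applied in some order;
the operation is order-independent). -/
noncomputable def lcSet (D : SetSystem α) (A : Finset α) : SetSystem α :=
  A.toList.foldl lc D

/-- The dual pivot `D *̄ A := ((D*A)+A)*A`. -/
noncomputable def dpivot (D : SetSystem α) (A : Finset α) : SetSystem α :=
  ((D.twist A).lcSet A).twist A

/-- Set systems reachable from `D` by sequences of twists and loop complementations. -/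
inductive Reachable : SetSystem α → SetSystem α → Prop
  | refl (D : SetSystem α) : Reachable D D
  | twist (D D' : SetSystem α) (A : Finset α) (hA : A ⊆ D'.E) :
      Reachable D D' → Reachable D (D'.twist A)
  | lc (D D' : SetSystem α) (A : Finset α) (hA : A ⊆ D'.E) :
      Reachable D D' → Reachable D (D'.lcSet A)

/-- A vf-safe delta-matroid: any sequence of twists and loop complementations
yields a delta-matroid. -/
def VfSafe (D : SetSystem α) : Prop := ∀ D', Reachable D D' → D'.IsDeltaMatroid

/-- The minimum-cardinality feasible sets. -/
def Fmin (D : SetSystem α) : Finset (Finset α) :=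
  D.F.filter fun F => ∀ F' ∈ D.F, F.card ≤ F'.card

/-- The maximum-cardinality feasible sets. -/
def Fmax (D : SetSystem α) : Finset (Finset α) :=
  D.F.filter fun F => ∀ F' ∈ D.F, F'.card ≤ F.card

/-- The lower matroid `D_min`. -/
def Dmin (D : SetSystem α) : SetSystem α := ⟨D.E, D.Fmin⟩

def IsRibbonLoop (D : SetSystem α) (e : α) : Prop := ∀ F ∈ D.Fmin, e ∉ F

def IsNonorientableRL (D : SetSystem α) (e : α) : Prop :=
  D.IsRibbonLoop e ∧ (D.twist {e}).IsRibbonLoop e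

def IsOrientableRL (D : SetSystem α) (e : α) : Prop :=
  D.IsRibbonLoop e ∧ (D.dpivot {e}).IsRibbonLoop e

def IsTrivialOrientableRL (D : SetSystem α) (e : α) : Prop :=
  D.IsOrientableRL e ∧ D.IsLoop e

def IsTrivialNonorientableRL (D : SetSystem α) (e : α) : Prop :=
  D.IsNonorientableRL e ∧ (D.lc e).IsLoop e


/-- `d(D)`: the minimum cardinality of a feasible set of `D`. -/
noncomputable def minCard (D : SetSystem α) : ℕ := sInf {n : ℕ | ∃ F ∈ D.F, n = F.card}

/-- The maximum cardinality of a feasible set of `D`. -/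
noncomputable def maxCard (D : SetSystem α) : ℕ := sSup {n : ℕ | ∃ F ∈ D.F, n = F.card}

/-- The rank function of the lower matroid `D_min`:
`r(S) = max {|F ∩ S| : F ∈ 𝓕_min(D)}`. -/
noncomputable def rankMin (D : SetSystem α) (S : Finset α) : ℕ :=
  sSup {n : ℕ | ∃ F ∈ D.Fmin, n = (F ∩ S).card}

/-- The restriction `D|A = D ∖ (E−A)`, with feasible sets
`{F ∩ A : F ∈ 𝓕, |F \ A| ≤ |F' \ A| for all F' ∈ 𝓕}`. -/
def restrict (D : SetSystem α) (A : Finset α) : SetSystem α :=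
  ⟨A, (D.F.filter fun F => ∀ F' ∈ D.F, (F \ A).card ≤ (F' \ A).card).image fun F => F ∩ A⟩

/-- `σ(A) = r((D|A)_max) − r((D|A)_min)`: the difference between the maximum and
minimum cardinalities of feasible sets of `D|A`. -/
noncomputable def sigmaGap (D : SetSystem α) (A : Finset α) : ℕ :=
  (D.restrict A).maxCard - (D.restrict A).minCard

end SetSystem

/-!
Fix `A ⊆ E` and let `m` be the least value of `|F \ A|` over feasible sets `F`. The exchange
axiom yields a feasible set `F₀` of minimum size with `|F₀ \ A| = m`. Applied to the
delta-matroid `D*A`, whose feasible sets `A ∆ F` satisfy `(A ∆ F) \ A = F \ A`, the same fact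
yields a feasible `F₁` minimising `|A ∆ F₁|` with `|F₁ \ A| = m`. Reading off
`r(E) = |F₀|`, `r(A) = d(D|A) = |F₀ ∩ A|`, the maximum size `|F₁ ∩ A|` of a feasible set of
`D|A`, and `d(D*A) = |A ∆ F₁| = |A| - |F₁ ∩ A| + m` gives
`d(D*A) + σ(A) + 2 r(A) = |A| + r(E)`, which matches the two sums term by term.
-/

namespace Finset

variable {α : Type*} [DecidableEq α]

theorem card_symmDiff_add_card_inter (A F : Finset α) :
    (A ∆ F).card + (F ∩ A).card = A.card + (F \ A).card := by
  rw [symmDiff_def, sup_eq_union, card_union_of_disjoint disjoint_sdiff_sdiff,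
    add_right_comm, inter_comm, card_sdiff_add_card_inter]

theorem card_symmDiff_pair_lt {X : Finset α} {u v : α} (hu : u ∈ X) (hv : v ∈ X) :
    (X ∆ {u, v}).card < X.card := by
  have hsub : ({u, v} : Finset α) ⊆ X := insert_subset hu (singleton_subset_iff.2 hv)
  rw [symmDiff_of_ge hsub]
  exact card_lt_card (sdiff_ssubset hsub (insert_nonempty u {v}))

theorem symmDiff_pair_of_mem_of_notMem {X : Finset α} {u v : α} (hu : u ∈ X) (hv : v ∉ X) :
    X ∆ {u, v} = insert v (X.erase u) := by
  ext a
  by_cases hau : a = u <;> by_cases hav : a = v <;> subst_vars <;>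
    simp_all [mem_symmDiff]

end Finset

namespace SetSystem

variable {α : Type} [DecidableEq α]

theorem minCard_le {D : SetSystem α} {F : Finset α} (hF : F ∈ D.F) : D.minCard ≤ F.card :=
  Nat.sInf_le ⟨F, hF, rfl⟩

theorem mem_Fmin_iff {D : SetSystem α} {F : Finset α} :
    F ∈ D.Fmin ↔ F ∈ D.F ∧ F.card = D.minCard := by
  refine ⟨fun h => ⟨(Finset.mem_filter.1 h).1, ?_⟩, fun ⟨hF, hcard⟩ => ?_⟩
  · obtain ⟨hF, hle⟩ := Finset.mem_filter.1 h
    obtain ⟨G, hG, hGcard⟩ := Nat.sInf_mem (⟨_, F, hF, rfl⟩ : {n | ∃ F ∈ D.F, n = F.card}.Nonempty)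
    exact le_antisymm ((hle G hG).trans_eq hGcard.symm) (minCard_le hF)
  · exact Finset.mem_filter.2 ⟨hF, fun F' hF' => hcard ▸ minCard_le hF'⟩

theorem minCard_eq_card_of_mem_Fmin {D : SetSystem α} {F : Finset α} (hF : F ∈ D.Fmin) :
    D.minCard = F.card :=
  (mem_Fmin_iff.1 hF).2.symm

theorem Fmin_nonempty {D : SetSystem α} (h : D.F.Nonempty) : D.Fmin.Nonempty := by
  obtain ⟨F, hF, hmin⟩ := Finset.exists_min_image D.F Finset.card h
  exact ⟨F, Finset.mem_filter.2 ⟨hF, hmin⟩⟩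

theorem rankMin_le_card (D : SetSystem α) (S : Finset α) : D.rankMin S ≤ S.card :=
  csSup_le' <| by
    rintro _ ⟨F, -, rfl⟩
    exact Finset.card_le_card Finset.inter_subset_right

theorem card_inter_le_rankMin {D : SetSystem α} {F : Finset α} (hF : F ∈ D.Fmin) (S : Finset α) :
    (F ∩ S).card ≤ D.rankMin S :=
  le_csSup ⟨S.card, by rintro _ ⟨F', -, rfl⟩; exact Finset.card_le_card Finset.inter_subset_right⟩
    ⟨F, hF, rfl⟩

theorem rankMin_mono (D : SetSystem α) {S T : Finset α} (hST : S ⊆ T) :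
    D.rankMin S ≤ D.rankMin T :=
  csSup_le' <| by
    rintro _ ⟨F, hF, rfl⟩
    exact (Finset.card_le_card (Finset.inter_subset_inter_left hST)).trans
      (card_inter_le_rankMin hF T)

theorem IsDeltaMatroid.twist {D : SetSystem α} (hD : D.IsDeltaMatroid) {A : Finset α}
    (hA : A ⊆ D.E) : (D.twist A).IsDeltaMatroid := by
  obtain ⟨hne, hsub, hex⟩ := hD
  refine ⟨hne.image _, ?_, ?_⟩
  · simp only [SetSystem.twist, Finset.mem_image, forall_exists_index, and_imp,
      forall_apply_eq_imp_iff₂]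
    intro F hF
    exact symmDiff_le (hA.trans Finset.subset_union_right)
      ((hsub F hF).trans Finset.subset_union_right)
  · simp only [SetSystem.twist, Finset.mem_image, forall_exists_index, and_imp,
      forall_apply_eq_imp_iff₂, symmDiff_symmDiff_symmDiff_comm, symmDiff_self, bot_symmDiff]
    intro X hX Y hY u hu
    obtain ⟨v, hv, hXv⟩ := hex X hX Y hY u hu
    exact ⟨v, hv, _, hXv, (symmDiff_assoc A X _).symm⟩

theorem IsDeltaMatroid.exists_mem_Fmin_forall_card_sdiff_le {D : SetSystem α}
    (hD : D.IsDeltaMatroid) (A : Finset α) :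
    ∃ F ∈ D.Fmin, ∀ F' ∈ D.F, (F \ A).card ≤ (F' \ A).card := by
  obtain ⟨hne, -, hex⟩ := hD
  obtain ⟨G, hG, hGmin⟩ := Finset.exists_min_image D.F (fun F => (F \ A).card) hne
  obtain ⟨F, hF, hFmin⟩ :=
    Finset.exists_min_image D.Fmin (fun F => (F \ G).card) (Fmin_nonempty hne)
  -- An exchange between `F` and `G` at `u ∈ (F \ A) \ G` cannot shrink `F`, so it moves `F`
  -- closer to `G`: this contradicts the choice of `F` unless `F \ A` is already minimal.
  refine ⟨F, hF, fun F' hF' => le_trans ?_ (hGmin F' hF')⟩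
  by_contra! hlt
  obtain ⟨u, huFA, huG⟩ : ∃ u ∈ F \ A, u ∉ G := by
    by_contra! h
    exact hlt.not_ge <| Finset.card_le_card fun a ha =>
      Finset.mem_sdiff.2 ⟨h a ha, (Finset.mem_sdiff.1 ha).2⟩
  have huF : u ∈ F := (Finset.mem_sdiff.1 huFA).1
  obtain ⟨hFD, hFcard⟩ := mem_Fmin_iff.1 hF
  obtain ⟨v, hv, hFuv⟩ := hex F hFD G hG u (Finset.mem_symmDiff.2 (Or.inl ⟨huF, huG⟩))
  have hvF : v ∉ F := fun hvF =>
    (Finset.card_symmDiff_pair_lt huF hvF).not_ge (hFcard ▸ minCard_le hFuv)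
  have hvG : v ∈ G := by simpa [Finset.mem_symmDiff, hvF] using hv
  rw [Finset.symmDiff_pair_of_mem_of_notMem huF hvF] at hFuv
  have hexchanged : insert v (F.erase u) ∈ D.Fmin := by
    refine mem_Fmin_iff.2 ⟨hFuv, ?_⟩
    rw [Finset.card_insert_of_notMem (fun h => hvF (Finset.mem_of_mem_erase h)),
      Finset.card_erase_add_one huF, hFcard]
  have hcloser := hFmin _ hexchanged
  rw [Finset.insert_sdiff_of_mem _ hvG, Finset.erase_sdiff_comm] at hcloser
  exact hcloser.not_gt (Finset.card_erase_lt_of_mem (Finset.mem_sdiff.2 ⟨huF, huG⟩))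

theorem mem_restrict_F_iff {D : SetSystem α} {A H : Finset α} :
    H ∈ (D.restrict A).F ↔
      ∃ F ∈ D.F, (∀ F' ∈ D.F, (F \ A).card ≤ (F' \ A).card) ∧ F ∩ A = H := by
  simp [restrict, and_assoc]

section Witnesses

variable {D : SetSystem α} {A F₀ F₁ : Finset α}

theorem rankMin_eq_card_inter (hF₀ : F₀ ∈ D.Fmin)
    (hF₀min : ∀ F ∈ D.F, (F₀ \ A).card ≤ (F \ A).card) : D.rankMin A = (F₀ ∩ A).card := by
  refine le_antisymm (csSup_le' ?_) (card_inter_le_rankMin hF₀ A)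
  rintro _ ⟨F, hF, rfl⟩
  obtain ⟨hFD, hFcard⟩ := mem_Fmin_iff.1 hF
  have := hF₀min F hFD
  have := Finset.card_inter_add_card_sdiff F A
  have := Finset.card_inter_add_card_sdiff F₀ A
  have := minCard_eq_card_of_mem_Fmin hF₀
  omega

theorem minCard_restrict_eq_card_inter (hF₀ : F₀ ∈ D.Fmin)
    (hF₀min : ∀ F ∈ D.F, (F₀ \ A).card ≤ (F \ A).card) :
    (D.restrict A).minCard = (F₀ ∩ A).card := by
  obtain ⟨hF₀D, hF₀card⟩ := mem_Fmin_iff.1 hF₀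
  refine IsLeast.csInf_eq ⟨⟨_, mem_restrict_F_iff.2 ⟨F₀, hF₀D, hF₀min, rfl⟩, rfl⟩, ?_⟩
  rintro _ ⟨_, hH, rfl⟩
  obtain ⟨F, hFD, hFmin, rfl⟩ := mem_restrict_F_iff.1 hH
  have := hF₀min F hFD
  have := hFmin F₀ hF₀D
  have := minCard_le hFD
  have := Finset.card_inter_add_card_sdiff F A
  have := Finset.card_inter_add_card_sdiff F₀ A
  omega

theorem maxCard_restrict_eq_card_inter (hF₁ : F₁ ∈ D.F)
    (hF₁min : ∀ F ∈ D.F, (F₁ \ A).card ≤ (F \ A).card)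
    (hF₁twist : ∀ F ∈ D.F, (A ∆ F₁).card ≤ (A ∆ F).card) :
    (D.restrict A).maxCard = (F₁ ∩ A).card := by
  refine IsGreatest.csSup_eq ⟨⟨_, mem_restrict_F_iff.2 ⟨F₁, hF₁, hF₁min, rfl⟩, rfl⟩, ?_⟩
  rintro _ ⟨_, hH, rfl⟩
  obtain ⟨F, hFD, hFmin, rfl⟩ := mem_restrict_F_iff.1 hH
  have := hF₁min F hFD
  have := hFmin F₁ hF₁
  have := hF₁twist F hFD
  have := Finset.card_symmDiff_add_card_inter A F
  have := Finset.card_symmDiff_add_card_inter A F₁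
  omega

theorem minCard_twist_eq_card_symmDiff (hF₁ : F₁ ∈ D.F)
    (hF₁twist : ∀ F ∈ D.F, (A ∆ F₁).card ≤ (A ∆ F).card) :
    (D.twist A).minCard = (A ∆ F₁).card := by
  refine IsLeast.csInf_eq ⟨⟨_, Finset.mem_image_of_mem _ hF₁, rfl⟩, ?_⟩
  rintro _ ⟨_, hH, rfl⟩
  obtain ⟨F, hFD, rfl⟩ := Finset.mem_image.1 hH
  exact hF₁twist F hFD

end Witnesses

theorem IsDeltaMatroid.minCard_twist_add_sigmaGap {D : SetSystem α} (hD : D.IsDeltaMatroid)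
    {A : Finset α} (hA : A ⊆ D.E) :
    (D.twist A).minCard + D.sigmaGap A + 2 * D.rankMin A = A.card + D.rankMin D.E := by
  obtain ⟨F₀, hF₀, hF₀min⟩ := hD.exists_mem_Fmin_forall_card_sdiff_le A
  obtain ⟨F₁', hF₁', hF₁'min⟩ := (hD.twist hA).exists_mem_Fmin_forall_card_sdiff_le A
  obtain ⟨F₁, hF₁, rfl⟩ := Finset.mem_image.1 (mem_Fmin_iff.1 hF₁').1
  have hF₁twist : ∀ F ∈ D.F, (A ∆ F₁).card ≤ (A ∆ F).card := fun F hF =>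
    (Finset.mem_filter.1 hF₁').2 _ (Finset.mem_image_of_mem _ hF)
  have hF₁min : ∀ F ∈ D.F, (F₁ \ A).card ≤ (F \ A).card := fun F hF => by
    simpa only [symmDiff_sdiff_left] using hF₁'min _ (Finset.mem_image_of_mem _ hF)
  have hF₀D := (mem_Fmin_iff.1 hF₀).1
  have hF₀E : F₀ ⊆ D.E := hD.2.1 F₀ hF₀D
  have hrankE : D.rankMin D.E = F₀.card := by
    rw [rankMin_eq_card_inter hF₀ fun F _ => by simp [Finset.sdiff_eq_empty_iff_subset.2 hF₀E],
      Finset.inter_eq_left.2 hF₀E]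
  rw [sigmaGap, minCard_twist_eq_card_symmDiff hF₁ hF₁twist,
    maxCard_restrict_eq_card_inter hF₁ hF₁min hF₁twist,
    minCard_restrict_eq_card_inter hF₀ hF₀min, rankMin_eq_card_inter hF₀ hF₀min, hrankE]
  have := hF₀min F₁ hF₁
  have := hF₁min F₀ hF₀D
  have := minCard_le hF₁
  have := minCard_eq_card_of_mem_Fmin hF₀
  have := Finset.card_symmDiff_add_card_inter A F₁
  have := Finset.card_inter_add_card_sdiff F₀ A
  have := Finset.card_inter_add_card_sdiff F₁ A
  omega

theorem sqrt_div_pow_mul_sqrt_mul_pow {x y : ℝ} (hx : 0 < x) (hy : 0 < y) {a d R r σ : ℕ}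
    (h : d + σ + 2 * r = a + R) (hrR : r ≤ R) (hra : r ≤ a) :
    √(y / x) ^ a * √(x * y) ^ d =
      √(y / x) ^ R * (x ^ (R - r) * y ^ (a - r) * (√(x * y))⁻¹ ^ σ) := by
  obtain ⟨s, hs, rfl⟩ : ∃ s, 0 < s ∧ s ^ 2 = x := ⟨√x, Real.sqrt_pos.2 hx, Real.sq_sqrt hx.le⟩
  obtain ⟨t, ht, rfl⟩ : ∃ t, 0 < t ∧ t ^ 2 = y := ⟨√y, Real.sqrt_pos.2 hy, Real.sq_sqrt hy.le⟩
  rw [← div_pow, ← mul_pow, Real.sqrt_sq (by positivity), Real.sqrt_sq (by positivity)]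
  obtain ⟨R', rfl⟩ := Nat.exists_eq_add_of_le hrR
  obtain ⟨a', rfl⟩ := Nat.exists_eq_add_of_le hra
  rw [Nat.add_sub_cancel_left, Nat.add_sub_cancel_left]
  refine mul_right_cancel₀ (pow_ne_zero σ (by positivity : s * t ≠ 0)) ?_
  rw [mul_assoc, ← pow_add, show d + σ = a' + R' by omega, inv_pow, div_pow, div_pow]
  field_simp
  ring

/-- The identity `Q_{(1,√(y/x),0)}(D;√(xy)) = (√(y/x))^{r(E)} R(D; x+1, y, 1/√(xy))`
relating the transition polynomial and the Bollobás–Riordan polynomial of `D`. -/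
theorem transition_eq_bollobasRiordan (D : SetSystem α) (hD : D.IsDeltaMatroid)
    (x y : ℝ) (hx : 0 < x) (hy : 0 < y) :
    (∑ B ∈ D.E.powerset,
        Real.sqrt (y / x) ^ B.card * Real.sqrt (x * y) ^ minCard (D.twist B)) =
      Real.sqrt (y / x) ^ D.rankMin D.E *
        ∑ A ∈ D.E.powerset,
          x ^ (D.rankMin D.E - D.rankMin A) * y ^ (A.card - D.rankMin A) *
            (Real.sqrt (x * y))⁻¹ ^ D.sigmaGap A := by
  rw [Finset.mul_sum]
  refine Finset.sum_congr rfl fun A hA => ?_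
  rw [Finset.mem_powerset] at hA
  exact sqrt_div_pow_mul_sqrt_mul_pow hx hy (hD.minCard_twist_add_sigmaGap hA)
    (D.rankMin_mono hA) (D.rankMin_le_card A)

end SetSystem
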